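/- Let V be a 1-dimensional manifold with a regular C^r differentiable structure (every locally defined C^r function near a point extends to a global C^r function agreeing with it near that point). If a C^r function f : V → ℝ has nonzero derivative (rank 1) at a point x, then f has nonzero derivative at every point y that is not separated from x. -/

import Mathlib

/-- A `C^r` atlas on a 1-dimensional manifold `V` (Hausdorffness not assumed):
charts are open embeddings `ℝ → V` covering `V`, with `C^r` transition maps. -/
structure OneManifoldCr (r : ℕ∞) (V : Type*) [TopologicalSpace V] where
  ι : Type
  chart : ι → ℝ → V
  openEmb : ∀ i, Topology.IsOpenEmbedding (chart i)
  cover : ∀ x : V, ∃ i t, chart i t = x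
  compat : ∀ i j, ContDiffOn ℝ r (fun t => Function.invFun (chart j) (chart i t))
    {t : ℝ | chart i t ∈ Set.range (chart j)}

variable {r : ℕ∞} {V : Type*} [TopologicalSpace V]

/-- `f : V → ℝ` is `C^r` for the atlas `A` if its read in every chart is `C^r`. -/
def OneManifoldCr.IsCrMap (A : OneManifoldCr r V) (f : V → ℝ) : Prop :=
  ∀ i, ContDiff ℝ r (f ∘ A.chart i)

/-- `f` is `C^r` on an open set `U ⊆ V` if its reads in charts are `C^r` on the
preimages of `U`. -/
def OneManifoldCr.IsCrOn (A : OneManifoldCr r V) (f : V → ℝ) (U : Set V) : Prop :=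
  ∀ i, ContDiffOn ℝ r (f ∘ A.chart i) (A.chart i ⁻¹' U)

/-- `f` has rank 1 at `x` if its derivative in some chart through `x` is nonzero. -/
def OneManifoldCr.RankOneAt (A : OneManifoldCr r V) (f : V → ℝ) (x : V) : Prop :=
  ∃ i t, A.chart i t = x ∧ deriv (f ∘ A.chart i) t ≠ 0

/-- The structure is regular if every `C^r` function defined on a neighborhood of a
point coincides, near that point, with a globally defined `C^r` function. -/
def OneManifoldCr.Regular (A : OneManifoldCr r V) : Prop :=
  ∀ (x : V) (U : Set V) (f : V → ℝ), IsOpen U → x ∈ U → A.IsCrOn f U →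
    ∃ g : V → ℝ, A.IsCrMap g ∧ ∃ W : Set V, IsOpen W ∧ x ∈ W ∧ Set.EqOn f g W

/-- Two points are non-separated if all their neighborhoods meet. -/
def NonSeparated {X : Type*} [TopologicalSpace X] (x z : X) : Prop :=
  ∀ U W : Set X, IsOpen U → IsOpen W → x ∈ U → z ∈ W → (U ∩ W).Nonempty

/-!
Read `f` in charts with `x = chart i t₀` and `y = chart j s₀`. Non-separation provides points
`u → s₀` of the overlap whose transition images `φ u` tend to `t₀`, and there
`(g ∘ chart j)' u = (g ∘ chart i)' (φ u) · φ' u` for every global `C^r` function `g`.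
If `(f ∘ chart j)' s₀ = 0` while `(f ∘ chart i)' t₀ ≠ 0`, this forces `φ' u → 0`, hence
`(g ∘ chart j)' s₀ = 0` for every global `g`. Regularity contradicts this: the coordinate of
chart `j` extends to a global `C^r` function, whose derivative in chart `j` is `1` at `s₀`.
-/

open Filter Topology Function Set

lemma NonSeparated.neBot_nhds_inf {X : Type*} [TopologicalSpace X] {x y : X}
    (h : NonSeparated x y) : (𝓝 x ⊓ 𝓝 y).NeBot := by
  refine inf_neBot_iff.2 fun U hU W hW => ?_
  obtain ⟨U', hU'U, hU'open, hxU'⟩ := mem_nhds_iff.1 hU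
  obtain ⟨W', hW'W, hW'open, hyW'⟩ := mem_nhds_iff.1 hW
  exact (h U' W' hU'open hW'open hxU' hyW').mono (inter_subset_inter hU'U hW'W)

lemma Topology.IsOpenEmbedding.tendsto_invFun {X Y : Type*} [TopologicalSpace X]
    [TopologicalSpace Y] [Nonempty X] {e : X → Y} (he : IsOpenEmbedding e) (a : X) :
    Tendsto (invFun e) (𝓝 (e a)) (𝓝 a) := by
  rw [← he.map_nhds_eq, tendsto_map'_iff, invFun_comp he.injective]
  exact tendsto_id

namespace OneManifoldCr

variable (A : OneManifoldCr r V)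

/-- Junk outside `chart i ⁻¹' range (chart j)`, where `invFun` has no preimage to pick. -/
noncomputable def transition (i j : A.ι) (t : ℝ) : ℝ :=
  invFun (A.chart j) (A.chart i t)

lemma chart_transition {i j : A.ι} {t : ℝ} (ht : A.chart i t ∈ range (A.chart j)) :
    A.chart j (A.transition i j t) = A.chart i t :=
  invFun_eq ht

lemma isOpen_chart_preimage_range (i j : A.ι) : IsOpen (A.chart i ⁻¹' range (A.chart j)) :=
  (A.openEmb j).isOpen_range.preimage (A.openEmb i).continuous

lemma deriv_comp_chart (hr : 1 ≤ r) {i j : A.ι} {g : V → ℝ} {u : ℝ}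
    (hu : A.chart j u ∈ range (A.chart i))
    (hg : DifferentiableAt ℝ (g ∘ A.chart i) (A.transition j i u)) :
    deriv (g ∘ A.chart j) u = deriv (g ∘ A.chart i) (A.transition j i u) *
      deriv (A.transition j i) u := by
  have hD : A.chart j ⁻¹' range (A.chart i) ∈ 𝓝 u :=
    (A.isOpen_chart_preimage_range j i).mem_nhds hu
  have hφ : DifferentiableAt ℝ (A.transition j i) u :=
    ((A.compat j i).contDiffAt hD).differentiableAt (by exact_mod_cast (one_pos.trans_le hr).ne')
  have hfactor : g ∘ A.chart j =ᶠ[𝓝 u] (g ∘ A.chart i) ∘ A.transition j i := by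
    filter_upwards [hD] with v hv
    simp only [comp_apply, A.chart_transition hv]
  rw [hfactor.deriv_eq, deriv_comp u hg hφ]

lemma exists_filter_of_nonSeparated {i j : A.ι} {t₀ s₀ : ℝ}
    (h : NonSeparated (A.chart i t₀) (A.chart j s₀)) :
    ∃ l : Filter ℝ, l.NeBot ∧ l ≤ 𝓝 s₀ ∧ (∀ᶠ u in l, A.chart j u ∈ range (A.chart i)) ∧
      Tendsto (A.transition j i) l (𝓝 t₀) := by
  have := h.neBot_nhds_inf
  have hi := (A.openEmb i).tendsto_invFun t₀
  have hj := (A.openEmb j).tendsto_invFun s₀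
  have hranges : ∀ᶠ v in 𝓝 (A.chart i t₀) ⊓ 𝓝 (A.chart j s₀),
      v ∈ range (A.chart i) ∧ v ∈ range (A.chart j) :=
    inter_mem (mem_inf_of_left ((A.openEmb i).isOpen_range.mem_nhds (mem_range_self t₀)))
      (mem_inf_of_right ((A.openEmb j).isOpen_range.mem_nhds (mem_range_self s₀)))
  refine ⟨map (invFun (A.chart j)) (𝓝 (A.chart i t₀) ⊓ 𝓝 (A.chart j s₀)), inferInstance,
    (map_mono inf_le_right).trans hj, ?_, ?_⟩
  · rw [eventually_map]
    filter_upwards [hranges] with v hv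
    rw [invFun_eq hv.2]
    exact hv.1
  · rw [tendsto_map'_iff]
    refine (hi.mono_left inf_le_left).congr' ?_
    filter_upwards [hranges] with v hv
    simp only [comp_apply, transition, invFun_eq hv.2]

lemma deriv_chart_eq_zero_of_tendsto (hr : 1 ≤ r) {i j : A.ι} {t₀ s₀ : ℝ} {l : Filter ℝ}
    [l.NeBot] (hl : l ≤ 𝓝 s₀) (hD : ∀ᶠ u in l, A.chart j u ∈ range (A.chart i))
    (hφ : Tendsto (A.transition j i) l (𝓝 t₀)) {f : V → ℝ} (hf : A.IsCrMap f)
    (hfi : deriv (f ∘ A.chart i) t₀ ≠ 0) (hfj : deriv (f ∘ A.chart j) s₀ = 0)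
    {g : V → ℝ} (hg : A.IsCrMap g) : deriv (g ∘ A.chart j) s₀ = 0 := by
  have hr' : (1 : WithTop ℕ∞) ≤ r := by exact_mod_cast hr
  have hr₀ : (r : WithTop ℕ∞) ≠ 0 := by exact_mod_cast (one_pos.trans_le hr).ne'
  have chain : ∀ h : V → ℝ, A.IsCrMap h → ∀ᶠ u in l, deriv (h ∘ A.chart j) u =
      deriv (h ∘ A.chart i) (A.transition j i u) * deriv (A.transition j i) u :=
    fun h hh => hD.mono fun u hu =>
      A.deriv_comp_chart hr hu ((hh i).differentiable hr₀ _)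
  have tendsto_i : ∀ h : V → ℝ, A.IsCrMap h → Tendsto (fun u => deriv (h ∘ A.chart i)
      (A.transition j i u)) l (𝓝 (deriv (h ∘ A.chart i) t₀)) :=
    fun h hh => (((hh i).continuous_deriv hr').tendsto t₀).comp hφ
  have tendsto_j : ∀ h : V → ℝ, A.IsCrMap h →
      Tendsto (deriv (h ∘ A.chart j)) l (𝓝 (deriv (h ∘ A.chart j) s₀)) :=
    fun h hh => (((hh j).continuous_deriv hr').tendsto s₀).mono_left hl
  have hφ' : Tendsto (deriv (A.transition j i)) l (𝓝 0) := by
    have hquot := (tendsto_j f hf).div (tendsto_i f hf) hfi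
    rw [hfj, zero_div] at hquot
    refine hquot.congr' ?_
    filter_upwards [chain f hf, (tendsto_i f hf).eventually_ne hfi] with u hu hne
    rw [Pi.div_apply, hu, mul_div_cancel_left₀ _ hne]
  have hlim := (tendsto_i g hg).mul hφ'
  rw [mul_zero] at hlim
  exact tendsto_nhds_unique (tendsto_j g hg) (hlim.congr' (EventuallyEq.symm (chain g hg)))

lemma Regular.exists_deriv_chart_eq_one {A : OneManifoldCr r V} (hreg : A.Regular)
    (j : A.ι) (s₀ : ℝ) : ∃ G : V → ℝ, A.IsCrMap G ∧ deriv (G ∘ A.chart j) s₀ = 1 := by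
  obtain ⟨G, hG, W, hWopen, hW, hEq⟩ := hreg (A.chart j s₀) (range (A.chart j))
    (invFun (A.chart j)) (A.openEmb j).isOpen_range (mem_range_self s₀) fun k => A.compat k j
  have hid : G ∘ A.chart j =ᶠ[𝓝 s₀] id := by
    filter_upwards [(hWopen.preimage (A.openEmb j).continuous).mem_nhds hW] with u hu
    rw [comp_apply, ← hEq hu, leftInverse_invFun (A.openEmb j).injective u, id]
  exact ⟨G, hG, by rw [hid.deriv_eq, deriv_id]⟩

end OneManifoldCr

/-- On a 1-manifold with a regular `C^r` structure, if a `C^r` function has rank 1 at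
`x`, it also has rank 1 at every point `y` not separated from `x`. -/
theorem rankOne_of_nonSeparated {r : ℕ∞} (hr : 1 ≤ r)
    {V : Type*} [TopologicalSpace V] (A : OneManifoldCr r V)
    (hreg : A.Regular) (f : V → ℝ) (hf : A.IsCrMap f)
    (x y : V) (hx : A.RankOneAt f x) (hxy : NonSeparated x y) :
    A.RankOneAt f y := by
  obtain ⟨i, t₀, rfl, hfi⟩ := hx
  obtain ⟨j, s₀, rfl⟩ := A.cover y
  refine ⟨j, s₀, rfl, fun hfj => ?_⟩
  obtain ⟨l, _, hl, hD, hφ⟩ := A.exists_filter_of_nonSeparated hxy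
  obtain ⟨G, hG, hG₁⟩ := hreg.exists_deriv_chart_eq_one j s₀
  have hG₀ := A.deriv_chart_eq_zero_of_tendsto hr hl hD hφ hf hfi hfj hG
  exact one_ne_zero (hG₁.symm.trans hG₀)
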